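/- arXiv:1604.05806 — 2 statements merged into one kernel-verified Lean document; each statement's English description precedes it below -/
import Mathlib

section
/- For every integer N ≥ 1, a_{2,N−1}(N+1,x) = (−1)² · 2! · S_{1,1}(N−1) · (x)_{N−1} = 2·(1 + 2 + ⋯ + N)·(x)_{N−1}. -/
open Finset

/-- Generalized Changhee power sums with shifted index: `genChangheeS j N = S_{1,j-1}(N)`,
so that `genChangheeS 0 N = S_{1,-1}(N) = 1`, `genChangheeS 1 N = S_{1,0}(N) = N + 1`,
and `genChangheeS (j+2) N = S_{1,j+1}(N) = ∑_{l=0}^{N} S_{1,j}(l)`. -/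
def genChangheeS : ℕ → ℕ → ℚ
  | 0, _ => 1
  | 1, N => N + 1
  | (j+2), N => ∑ l ∈ Finset.range (N+1), genChangheeS (j+1) l

noncomputable def fallingFactorial (x : ℝ) (n : ℕ) : ℝ := ∏ i ∈ Finset.range n, (x - i)

/-- The coefficients `a_{i,j}(N, x)` arising from repeated differentiation of the
λ-Changhee generating function: `a_{0,0}(N,x) = 0`, `a_{1,0}(1,x) = -1`, `a_{0,1}(1,x) = x`,
and for `N ≥ 1`, `i, j ≥ 0` with `1 ≤ i + j ≤ N + 1`,
`a_{i,j}(N+1,x) = -N·a_{i,j}(N,x) - i·a_{i-1,j}(N,x) + (x - j + 1)·a_{i,j-1}(N,x)`,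
with the convention that `a_{i,j}(N,x) = 0` whenever `i < 0`, `j < 0`, or `i + j > N`. -/
noncomputable def aCh : ℕ → ℤ → ℤ → ℝ → ℝ
  | 0, _, _, _ => 0
  | 1, i, j, x => if i = 1 ∧ j = 0 then -1 else if i = 0 ∧ j = 1 then x else 0
  | (N+2), i, j, x =>
      if 0 ≤ i ∧ 0 ≤ j ∧ 1 ≤ i + j ∧ i + j ≤ N + 2 then
        -(N+1 : ℝ) * aCh (N+1) i j x - (i : ℝ) * aCh (N+1) (i-1) j x
          + (x - (j : ℝ) + 1) * aCh (N+1) i (j-1) x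
      else 0

/-!
On the top diagonal `i + j = N` the first term of the recursion vanishes, since
`a_{i,j}(N-1, x) = 0` there, leaving `a_{i,j}(N) = -i·a_{i-1,j}(N-1) + (x-j+1)·a_{i,j-1}(N-1)`.
The closed form `a_{i,j}(i+j, x) = (-1)^i i! S_{1,i-1}(j) (x)_j` satisfies this two-term
recursion because `(x)_j (x - j) = (x)_{j+1}` and the power sums obey the Pascal-type rule
`S_{1,i}(j+1) = S_{1,i}(j) + S_{1,i-1}(j+1)`. The theorem is the case `i = 2`, where
`S_{1,1}(N-1) = 1 + 2 + ⋯ + N`.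
-/

theorem fallingFactorial_succ (x : ℝ) (n : ℕ) :
    fallingFactorial x (n + 1) = fallingFactorial x n * (x - n) :=
  prod_range_succ _ n

@[simp]
theorem genChangheeS_zero_left (j : ℕ) : genChangheeS 0 j = 1 := rfl

@[simp]
theorem genChangheeS_zero_right : ∀ i : ℕ, genChangheeS i 0 = 1
  | 0 => rfl
  | 1 => by simp [genChangheeS]
  | i + 2 => by simp [genChangheeS, genChangheeS_zero_right (i + 1)]

theorem genChangheeS_succ_succ (i j : ℕ) :
    genChangheeS (i + 1) (j + 1) = genChangheeS (i + 1) j + genChangheeS i (j + 1) := by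
  rcases i with _ | i
  · simp only [genChangheeS]
    push_cast
    ring
  · exact sum_range_succ _ (j + 1)

theorem genChangheeS_two (m : ℕ) : genChangheeS 2 m = ∑ i ∈ Icc 1 (m + 1), (i : ℚ) := by
  simp only [genChangheeS]
  rw [← Ico_add_one_right_eq_Icc, range_eq_Ico]
  exact_mod_cast sum_Ico_add' (fun i : ℕ => (i : ℚ)) 0 (m + 1) 1

theorem aCh_eq_zero_of_lt {N : ℕ} {i j : ℤ} (x : ℝ) (h : (N : ℤ) < i + j) :
    aCh N i j x = 0 := by
  match N with
  | 0 => rfl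
  | 1 => rw [aCh, if_neg (by omega), if_neg (by omega)]
  | N + 2 => rw [aCh, if_neg (by push_cast at h; omega)]

theorem aCh_eq_zero_of_neg_right {N : ℕ} {i j : ℤ} (x : ℝ) (hj : j < 0) :
    aCh N i j x = 0 := by
  match N with
  | 0 => rfl
  | 1 => rw [aCh, if_neg (by omega), if_neg (by omega)]
  | N + 2 => rw [aCh, if_neg (by omega)]

theorem aCh_top_recursion {N : ℕ} {i j : ℤ} (x : ℝ) (hi : 0 ≤ i) (hj : 0 ≤ j)
    (hN : i + j = N + 2) :
    aCh (N + 2) i j x =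
      -(i : ℝ) * aCh (N + 1) (i - 1) j x + (x - j + 1) * aCh (N + 1) i (j - 1) x := by
  rw [aCh, if_pos (by omega), aCh_eq_zero_of_lt x (by push_cast; omega)]
  ring

theorem aCh_top_diagonal (x : ℝ) :
    ∀ n i j : ℕ, i + j = n + 1 →
      aCh (n + 1) i j x = (-1) ^ i * i.factorial * (genChangheeS i j : ℝ) * fallingFactorial x j
  | 0, 1, 0, _ => by simp [aCh, fallingFactorial]
  | 0, 0, 1, _ => by simp [aCh, fallingFactorial]
  | 0, 0, 0, h | 0, _ + 2, _, h | 0, _, _ + 2, h | 0, _ + 1, _ + 1, h => by omega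
  | n + 1, i, j, hij => by
    rw [aCh_top_recursion x (Int.natCast_nonneg i) (Int.natCast_nonneg j) (by omega)]
    rcases i with _ | i <;> rcases j with _ | j
    · omega
    · have ih := aCh_top_diagonal x n 0 j (by omega)
      push_cast at ih ⊢
      rw [add_sub_cancel_right, ih, fallingFactorial_succ]
      simp only [genChangheeS_zero_left, Rat.cast_one, Nat.factorial_zero, Nat.cast_one]
      ring
    · have ih := aCh_top_diagonal x n i 0 (by omega)
      push_cast at ih ⊢
      rw [add_sub_cancel_right, ih, aCh_eq_zero_of_neg_right x (by norm_num),
        genChangheeS_zero_right, genChangheeS_zero_right, Nat.factorial_succ]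
      push_cast
      ring
    · have ih_left := aCh_top_diagonal x n i (j + 1) (by omega)
      have ih_right := aCh_top_diagonal x n (i + 1) j (by omega)
      push_cast at ih_left ih_right ⊢
      rw [add_sub_cancel_right, add_sub_cancel_right, ih_left, ih_right, genChangheeS_succ_succ,
        fallingFactorial_succ, Nat.factorial_succ]
      push_cast
      ring

/-- `a_{2,N-1}(N+1,x) = (-1)² · 2! · S_{1,1}(N-1) · (x)_{N-1} = 2·(1 + 2 + ⋯ + N)·(x)_{N-1}`
for `N ≥ 1`. -/
theorem aCh_two_Nsub (N : ℕ) (hN : 1 ≤ N) (x : ℝ) :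
    aCh (N + 1) 2 ((N : ℤ) - 1) x
        = (-1 : ℝ) ^ 2 * (Nat.factorial 2 : ℝ) * (genChangheeS 2 (N - 1) : ℝ) *
            fallingFactorial x (N - 1) ∧
      aCh (N + 1) 2 ((N : ℤ) - 1) x
        = 2 * (∑ i ∈ Finset.Icc 1 N, (i : ℝ)) * fallingFactorial x (N - 1) := by
  obtain ⟨m, rfl⟩ : ∃ m, N = m + 1 := ⟨N - 1, by omega⟩
  have hj : ((m + 1 : ℕ) : ℤ) - 1 = ((m : ℕ) : ℤ) := by omega
  have top := aCh_top_diagonal x (m + 1) 2 m (by omega)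
  rw [Nat.cast_ofNat] at top
  rw [hj, Nat.add_sub_cancel, top]
  refine ⟨rfl, ?_⟩
  rw [genChangheeS_two]
  norm_num
end

section
/- For every integer N ≥ 2, a_{1,2}(N+1,x) = 3·(x)_2·(−1)^{N−1}·N!·H_{N,2}, where (x)_2 = x(x−1). -/
open Finset

/-- Generalized harmonic numbers `H_{N,j}`: `H_{N,0} = 1`,
`H_{N,1} = 1 + 1/2 + ⋯ + 1/N`, and `H_{N,j} = ∑_{l=j}^{N} H_{l-1,j-1}/l` for `j ≥ 2`. -/
def genHarmonic : ℕ → ℕ → ℚ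
  | _, 0 => 1
  | N, 1 => ∑ i ∈ Finset.range N, (1 : ℚ) / (i + 1)
  | N, (j+2) => ∑ l ∈ Finset.Icc (j+2) N, genHarmonic (l-1) (j+1) / l
termination_by N j => j

/-!
Every coefficient on the way to `a_{1,2}` has a closed form `±N! · p(x) · H`, with `p` a
polynomial and `H` a generalized harmonic number. Dividing the recursion
`a(N+2) = -(N+1)·a(N+1) + (lower terms)` by `(-1)^(N+1) (N+1)!` turns it into
`H_{N+1,1} = H_{N,1} + 1/(N+1)` and `H_{N+1,2} = H_{N,2} + H_{N,1}/(N+1)`, so the closed forms for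
`a_{1,0}`, `a_{0,1}`, `a_{1,1}`, `a_{0,2}` and finally `a_{1,2}` follow in turn by induction on `N`.
-/

open Nat

lemma aCh_succ_succ {N : ℕ} {i j : ℤ} (x : ℝ) (hi : 0 ≤ i) (hj : 0 ≤ j) (h₁ : 1 ≤ i + j)
    (h₂ : i + j ≤ N + 2) :
    aCh (N + 2) i j x = -(N + 1 : ℝ) * aCh (N + 1) i j x - i * aCh (N + 1) (i - 1) j x
      + (x - j + 1) * aCh (N + 1) i (j - 1) x := by
  rw [aCh, if_pos ⟨hi, hj, h₁, h₂⟩]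

lemma aCh_of_neg_right (N : ℕ) {i j : ℤ} (x : ℝ) (hj : j < 0) : aCh N i j x = 0 := by
  match N with
  | 0 => rfl
  | 1 => rw [aCh, if_neg (by omega), if_neg (by omega)]
  | _ + 2 => rw [aCh, if_neg (by omega)]

lemma aCh_zero_zero (N : ℕ) (x : ℝ) : aCh N 0 0 x = 0 := by
  match N with
  | 0 => rfl
  | 1 => rw [aCh, if_neg (by omega), if_neg (by omega)]
  | _ + 2 => rw [aCh, if_neg (by omega)]

lemma genHarmonic_succ_one (N : ℕ) : genHarmonic (N + 1) 1 = genHarmonic N 1 + 1 / (N + 1) := by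
  rw [genHarmonic.eq_2, genHarmonic.eq_2, Finset.sum_range_succ]

lemma genHarmonic_succ_two (N : ℕ) :
    genHarmonic (N + 1) 2 = genHarmonic N 2 + genHarmonic N 1 / (N + 1) := by
  cases N with
  | zero => simp [genHarmonic.eq_2, genHarmonic.eq_3]
  | succ n =>
    rw [genHarmonic.eq_3 (n + 2) 0, genHarmonic.eq_3 (n + 1) 0,
      Finset.sum_Icc_succ_top (by omega : 0 + 2 ≤ n + 1 + 1)]
    norm_num

lemma fallingFactorial_two (x : ℝ) : fallingFactorial x 2 = x * (x - 1) := by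
  simp [fallingFactorial, Finset.prod_range_succ]

section ClosedForms

variable (x : ℝ)

lemma aCh_one_zero (N : ℕ) : aCh (N + 1) 1 0 x = (-1) ^ (N + 1) * N ! := by
  induction N with
  | zero => simp [aCh]
  | succ n ih =>
    rw [aCh_succ_succ x (by norm_num) le_rfl (by norm_num) (by omega)]
    norm_num [ih, aCh_zero_zero, aCh_of_neg_right, Nat.factorial_succ]
    ring

lemma aCh_zero_one (N : ℕ) : aCh (N + 1) 0 1 x = (-1) ^ N * N ! * x := by
  induction N with
  | zero => simp [aCh]
  | succ n ih =>
    rw [aCh_succ_succ x le_rfl (by norm_num) (by norm_num) (by omega)]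
    norm_num [ih, aCh_zero_zero, Nat.factorial_succ]
    ring

lemma aCh_one_one (N : ℕ) :
    aCh (N + 1) 1 1 x = 2 * x * (-1) ^ N * N ! * genHarmonic N 1 := by
  induction N with
  | zero => simp [aCh, genHarmonic.eq_2]
  | succ n ih =>
    rw [aCh_succ_succ x (by norm_num) (by norm_num) (by norm_num) (by omega)]
    norm_num [ih, aCh_one_zero, aCh_zero_one, genHarmonic_succ_one, Nat.factorial_succ]
    field_simp
    ring

lemma aCh_zero_two (N : ℕ) :
    aCh (N + 1) 0 2 x = x * (x - 1) * (-1) ^ (N + 1) * N ! * genHarmonic N 1 := by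
  induction N with
  | zero => simp [aCh, genHarmonic.eq_2]
  | succ n ih =>
    rw [aCh_succ_succ x le_rfl (by norm_num) (by norm_num) (by omega)]
    norm_num [ih, aCh_zero_one, genHarmonic_succ_one, Nat.factorial_succ]
    field_simp
    ring

lemma aCh_one_two_eq (N : ℕ) :
    aCh (N + 1) 1 2 x = 3 * (x * (x - 1)) * (-1) ^ (N + 1) * N ! * genHarmonic N 2 := by
  induction N with
  | zero => simp [aCh, genHarmonic.eq_3]
  | succ n ih =>
    -- at `N = 2` the recursion is not in force (`i + j > N`); there `a_{1,2}(2) = 0 = H_{1,2}`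
    obtain rfl | hn := n.eq_zero_or_pos
    · simp [aCh, genHarmonic.eq_3]
    rw [aCh_succ_succ x (by norm_num) (by norm_num) (by norm_num) (by omega)]
    norm_num [ih, aCh_one_one, aCh_zero_two, genHarmonic_succ_two, Nat.factorial_succ]
    field_simp
    ring

end ClosedForms

theorem aCh_one_two_general (N : ℕ) (x : ℝ) :
    aCh (N + 1) 1 2 x
      = 3 * fallingFactorial x 2 * (-1 : ℝ) ^ (N - 1) * (Nat.factorial N : ℝ) *
          (genHarmonic N 2 : ℝ) := by
  rw [aCh_one_two_eq, fallingFactorial_two]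
  cases N with
  | zero => simp [genHarmonic.eq_3]
  | succ n => rw [Nat.add_sub_cancel]; ring

/-- For `N ≥ 2`, `a_{1,2}(N+1,x) = 3·(x)_2·(-1)^{N-1}·N!·H_{N,2}`. -/
theorem aCh_one_two (N : ℕ) (hN : 2 ≤ N) (x : ℝ) :
    aCh (N + 1) 1 2 x
      = 3 * fallingFactorial x 2 * (-1 : ℝ) ^ (N - 1) * (Nat.factorial N : ℝ) *
          (genHarmonic N 2 : ℝ) :=
  aCh_one_two_general N x
end
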